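/- arXiv:2109.03908 — 3 statements merged into one kernel-verified Lean document; each statement's English description precedes it below -/
import Mathlib

section
/- Let C be a polygonal curve with vertices p_0, …, p_m and L(C) > 0, and let f(C) be its arclength respacing. Then L(C) = L(f(C)) if and only if f(C) is equilateral. -/
open Finset Filter

noncomputable section

/-- The length of the polygonal curve with vertices `p 0, …, p m`
(also the arclength distance from `p 0` to `p m` along the curve). -/
def polyLength {dim : ℕ} (p : ℕ → EuclideanSpace ℝ (Fin dim)) (m : ℕ) : ℝ :=
  ∑ i ∈ Finset.range m, ‖p (i + 1) - p i‖

/-- `P` is the arclength-parameterized linear interpolation of the polygonal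
curve with vertices `p 0, …, p m`:
`P ((1-t)·d_{k-1} + t·d_k) = (1-t)·p_{k-1} + t·p_k` for `t ∈ [0,1]`, `k = 1, …, m`,
where `d_k = polyLength p k` is the arclength up to vertex `k`. -/
def IsArcParam {dim : ℕ} (p : ℕ → EuclideanSpace ℝ (Fin dim)) (m : ℕ)
    (P : ℝ → EuclideanSpace ℝ (Fin dim)) : Prop :=
  ∀ k : ℕ, 1 ≤ k → k ≤ m → ∀ t : ℝ, 0 ≤ t → t ≤ 1 →
    P ((1 - t) * polyLength p (k - 1) + t * polyLength p k)
      = (1 - t) • p (k - 1) + t • p k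

/-- The polygonal curve with vertices `p 0, …, p m` is equilateral:
all consecutive interpoint distances agree. -/
def IsEquilateral {dim : ℕ} (p : ℕ → EuclideanSpace ℝ (Fin dim)) (m : ℕ) : Prop :=
  ∀ k l : ℕ, 1 ≤ k → k ≤ m → 1 ≤ l → l ≤ m →
    ‖p k - p (k - 1)‖ = ‖p l - p (l - 1)‖

/-- `q 0, …, q m` are the vertices of the arclength respacing `f(C)` of the
polygonal curve `C` with vertices `p 0, …, p m`:
`q k = P (k·L(C)/m)` where `P` is the arclength parameterization of `C`;
by convention `f(C) := C` when `L(C) = 0`. -/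
def Respaces {dim : ℕ} (m : ℕ) (p q : ℕ → EuclideanSpace ℝ (Fin dim)) : Prop :=
  (polyLength p m = 0 ∧ ∀ k ≤ m, q k = p k) ∨
  (0 < polyLength p m ∧ ∃ P : ℝ → EuclideanSpace ℝ (Fin dim), IsArcParam p m P ∧
    ∀ k ≤ m, q k = P ((k : ℝ) * polyLength p m / m))

lemma polyLength_succ {dim : ℕ} (p : ℕ → EuclideanSpace ℝ (Fin dim)) (k : ℕ) :
    polyLength p (k + 1) = polyLength p k + ‖p (k + 1) - p k‖ := by
  simp [polyLength, Finset.sum_range_succ]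

lemma polyLength_mono {dim : ℕ} (p : ℕ → EuclideanSpace ℝ (Fin dim)) :
    Monotone (polyLength p) := by
  apply monotone_nat_of_le_succ
  intro k
  rw [polyLength_succ]
  exact le_add_of_nonneg_right (norm_nonneg _)

lemma polyLength_zero {dim : ℕ} (p : ℕ → EuclideanSpace ℝ (Fin dim)) :
    polyLength p 0 = 0 := by simp [polyLength]

/-- On one segment, `P` is an isometry in the parameter. -/
lemma seg_norm {dim m : ℕ} {p : ℕ → EuclideanSpace ℝ (Fin dim)}
    {P : ℝ → EuclideanSpace ℝ (Fin dim)} (hP : IsArcParam p m P)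
    {j : ℕ} (hj : j < m) {x y : ℝ}
    (hx1 : polyLength p j ≤ x) (hx2 : x ≤ polyLength p (j + 1))
    (hy1 : polyLength p j ≤ y) (hy2 : y ≤ polyLength p (j + 1)) :
    ‖P x - P y‖ = |x - y| := by
  set a := polyLength p j with ha
  set b := polyLength p (j + 1) with hb
  have hab : b = a + ‖p (j + 1) - p j‖ := polyLength_succ p j
  rcases eq_or_lt_of_le (norm_nonneg (p (j + 1) - p j)) with h0 | hpos
  · have hba : b = a := by rw [hab, ← h0]; ring
    have hxy : x = y := le_antisymm (by linarith [hba ▸ hx2]) (by linarith [hba ▸ hy2])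
    simp [hxy]
  · have hc : (0:ℝ) < b - a := by rw [hab]; linarith
    have key : ∀ z : ℝ, a ≤ z → z ≤ b →
        P z = (1 - (z - a)/(b - a)) • p j + ((z - a)/(b - a)) • p (j + 1) := by
      intro z hz1 hz2
      have ht0 : 0 ≤ (z - a)/(b - a) := div_nonneg (by linarith) hc.le
      have ht1 : (z - a)/(b - a) ≤ 1 := (div_le_one hc).mpr (by linarith)
      have h := hP (j + 1) (by omega) hj ((z - a)/(b - a)) ht0 ht1
      simp only [Nat.add_sub_cancel] at h
      rw [← ha, ← hb] at h
      have harg : (1 - (z - a)/(b - a)) * a + (z - a)/(b - a) * b = z := by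
        field_simp
        ring
      rwa [harg] at h
    rw [key x hx1 hx2, key y hy1 hy2]
    have : (1 - (x - a)/(b - a)) • p j + ((x - a)/(b - a)) • p (j + 1)
        - ((1 - (y - a)/(b - a)) • p j + ((y - a)/(b - a)) • p (j + 1))
        = ((x - y)/(b - a)) • (p (j + 1) - p j) := by
      rw [smul_sub]
      module
    rw [this, norm_smul, Real.norm_eq_abs, abs_div, abs_of_pos hc]
    rw [show ‖p (j+1) - p j‖ = b - a by rw [hab]; ring]
    field_simp

/-- `P` is 1-Lipschitz on `[0, polyLength p m]`. -/
lemma lip {dim m : ℕ} {p : ℕ → EuclideanSpace ℝ (Fin dim)}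
    {P : ℝ → EuclideanSpace ℝ (Fin dim)} (hP : IsArcParam p m P) :
    ∀ j ≤ m, ∀ x y : ℝ, 0 ≤ x → x ≤ y → y ≤ polyLength p j → ‖P y - P x‖ ≤ y - x := by
  intro j
  induction j with
  | zero =>
    intro _ x y hx hxy hy
    rw [polyLength_zero] at hy
    have : x = y := le_antisymm hxy (by linarith)
    simp [this]
  | succ j ih =>
    intro hjm x y hx hxy hy
    have hjm' : j ≤ m := by omega
    by_cases hyd : y ≤ polyLength p j
    · exact ih hjm' x y hx hxy hyd
    · push_neg at hyd
      by_cases hxd : polyLength p j ≤ x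
      · rw [seg_norm hP (by omega) (le_trans hxd hxy) hy hxd (le_trans hxy hy),
          abs_of_nonneg (by linarith)]
      · push_neg at hxd
        have h1 : ‖P y - P (polyLength p j)‖ = |y - polyLength p j| :=
          seg_norm hP (by omega) hyd.le hy le_rfl (by linarith)
        have h2 : ‖P (polyLength p j) - P x‖ ≤ polyLength p j - x :=
          ih hjm' x (polyLength p j) hx hxd.le le_rfl
        calc ‖P y - P x‖ ≤ ‖P y - P (polyLength p j)‖ + ‖P (polyLength p j) - P x‖ :=
              norm_sub_le_norm_sub_add_norm_sub _ _ _
          _ ≤ (y - polyLength p j) + (polyLength p j - x) := by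
              rw [h1, abs_of_nonneg (by linarith)]; linarith
          _ = y - x := by ring

/-- Pigeonhole: some interval `[k·L/m, (k+1)·L/m]` contains no breakpoint in its
interior, so the corresponding respaced chord has length exactly `L/m`. -/
lemma exists_exact {dim m : ℕ} (hm : 1 ≤ m) {p : ℕ → EuclideanSpace ℝ (Fin dim)}
    (hL : 0 < polyLength p m)
    {P : ℝ → EuclideanSpace ℝ (Fin dim)} (hP : IsArcParam p m P) :
    ∃ k, k < m ∧ ‖P (((k:ℝ) + 1) * polyLength p m / ↑m) - P ((k:ℝ) * polyLength p m / ↑m)‖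
      = polyLength p m / ↑m := by
  set L := polyLength p m with hLdef
  have hm0 : (0:ℝ) < m := by exact_mod_cast hm
  have hLm : 0 < L / m := div_pos hL hm0
  have clean : ∃ k < m, ∀ i, 1 ≤ i → i < m →
      ¬((k:ℝ) * L / ↑m < polyLength p i ∧ polyLength p i < ((k:ℝ) + 1) * L / ↑m) := by
    by_contra hcon
    push_neg at hcon
    have hcon2 : ∀ k : ℕ, ∃ i : ℕ, k < m →
        (1 ≤ i ∧ i < m ∧ (k:ℝ) * L / ↑m < polyLength p i ∧
          polyLength p i < ((k:ℝ) + 1) * L / ↑m) := by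
      intro k
      by_cases h : k < m
      · obtain ⟨i, h1, h2, h3, h4⟩ := hcon k h
        exact ⟨i, fun _ => ⟨h1, h2, h3, h4⟩⟩
      · exact ⟨0, fun h' => absurd h' h⟩
    choose f hf using hcon2
    obtain ⟨a, ha, b, hb, hab, hfab⟩ :=
      Finset.exists_ne_map_eq_of_card_lt_of_maps_to
        (s := Finset.range m) (t := Finset.Ico 1 m)
        (by simp [Nat.card_Ico]; omega)
        (fun k hk => by
          obtain ⟨h1, h2, _, _⟩ := hf k (Finset.mem_range.mp hk)
          exact Finset.mem_Ico.mpr ⟨h1, h2⟩)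
    rw [Finset.mem_range] at ha hb
    obtain ⟨_, _, ha3, ha4⟩ := hf a ha
    obtain ⟨_, _, hb3, hb4⟩ := hf b hb
    rw [hfab] at ha3 ha4
    rcases lt_or_gt_of_ne hab with h | h
    · have hcast : (a:ℝ) + 1 ≤ (b:ℝ) := by exact_mod_cast h
      have : ((a:ℝ) + 1) * L / ↑m ≤ (b:ℝ) * L / ↑m := by
        rw [mul_div_assoc, mul_div_assoc]
        exact mul_le_mul_of_nonneg_right hcast hLm.le
      linarith
    · have hcast : (b:ℝ) + 1 ≤ (a:ℝ) := by exact_mod_cast h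
      have : ((b:ℝ) + 1) * L / ↑m ≤ (a:ℝ) * L / ↑m := by
        rw [mul_div_assoc, mul_div_assoc]
        exact mul_le_mul_of_nonneg_right hcast hLm.le
      linarith
  obtain ⟨k, hk, hclean⟩ := clean
  refine ⟨k, hk, ?_⟩
  have hkx : (0:ℝ) ≤ (k:ℝ) * L / ↑m := by positivity
  -- the largest breakpoint index ≤ k·L/m
  set S : Finset ℕ := (Finset.range m).filter (fun j => polyLength p j ≤ (k:ℝ) * L / ↑m)
    with hSdef
  have hS0 : 0 ∈ S := by
    rw [hSdef, Finset.mem_filter, Finset.mem_range]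
    exact ⟨by omega, by rw [polyLength_zero]; exact hkx⟩
  set j0 := S.max' ⟨0, hS0⟩ with hj0def
  have hj0S : j0 ∈ S := S.max'_mem _
  rw [hSdef, Finset.mem_filter, Finset.mem_range] at hj0S
  obtain ⟨hj0m, hj0le⟩ := hj0S
  have hcast1 : ((k:ℝ) + 1) * L / ↑m ≤ (m:ℝ) * L / ↑m := by
    rw [mul_div_assoc, mul_div_assoc]
    refine mul_le_mul_of_nonneg_right ?_ hLm.le
    exact_mod_cast hk
  have hmLm : (m:ℝ) * L / ↑m = L := by field_simp
  have hnext : ((k:ℝ) + 1) * L / ↑m ≤ polyLength p (j0 + 1) := by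
    by_cases hcase : j0 + 1 = m
    · rw [hcase]; rw [hmLm] at hcast1; exact hcast1
    · have hj1m : j0 + 1 < m := by omega
      have hnotS : j0 + 1 ∉ S := fun hmem => by
        have := S.le_max' _ hmem
        omega
      rw [hSdef, Finset.mem_filter, Finset.mem_range] at hnotS
      push_neg at hnotS
      have hgt : (k:ℝ) * L / ↑m < polyLength p (j0 + 1) := hnotS hj1m
      have := hclean (j0 + 1) (by omega) hj1m
      push_neg at this
      exact this hgt
  have hxy : (k:ℝ) * L / ↑m + L / ↑m = ((k:ℝ) + 1) * L / ↑m := by ring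
  have h := seg_norm hP hj0m (x := ((k:ℝ) + 1) * L / ↑m) (y := (k:ℝ) * L / ↑m)
    (by linarith) hnext hj0le (by linarith)
  rw [h, abs_of_pos (by linarith)]
  ring

/-- `L(C) = L(f(C))` iff the arclength respacing `f(C)` is equilateral. -/
theorem stmt3 {dim m : ℕ} (hm : 1 ≤ m) (p : ℕ → EuclideanSpace ℝ (Fin dim))
    (hL : 0 < polyLength p m)
    (P : ℝ → EuclideanSpace ℝ (Fin dim)) (hP : IsArcParam p m P)
    (q : ℕ → EuclideanSpace ℝ (Fin dim))
    (hq : ∀ k ≤ m, q k = P ((k : ℝ) * polyLength p m / m)) :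
    polyLength p m = polyLength q m ↔ IsEquilateral q m := by
  set L := polyLength p m with hLdef
  have hm0 : (0:ℝ) < m := by exact_mod_cast hm
  have hLm : 0 < L / m := div_pos hL hm0
  have hcast : ∀ i : ℕ, ((i + 1 : ℕ) : ℝ) = (i:ℝ) + 1 := by intro i; push_cast; ring
  have hchord_le : ∀ i, i < m → ‖q (i + 1) - q i‖ ≤ L / ↑m := by
    intro i hi
    rw [hq (i + 1) (by omega), hq i (by omega), hcast i]
    have hy : ((i:ℝ) + 1) * L / ↑m ≤ L := by
      calc ((i:ℝ) + 1) * L / ↑m ≤ (m:ℝ) * L / ↑m := by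
            rw [mul_div_assoc, mul_div_assoc]
            refine mul_le_mul_of_nonneg_right ?_ hLm.le
            exact_mod_cast hi
        _ = L := by field_simp
    have h := lip hP m le_rfl ((i:ℝ) * L / ↑m) (((i:ℝ) + 1) * L / ↑m)
      (by positivity)
      (by have : ((i:ℝ) + 1) * L / ↑m = (i:ℝ) * L / ↑m + L / ↑m := by ring
          linarith) hy
    calc ‖P (((i:ℝ) + 1) * L / ↑m) - P ((i:ℝ) * L / ↑m)‖
        ≤ ((i:ℝ) + 1) * L / ↑m - (i:ℝ) * L / ↑m := h
      _ = L / ↑m := by ring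
  obtain ⟨k0, hk0, hex⟩ := exists_exact hm hL hP
  have hchord0 : ‖q (k0 + 1) - q k0‖ = L / ↑m := by
    rw [hq (k0 + 1) (by omega), hq k0 (by omega), hcast k0]
    exact hex
  constructor
  · intro hsum
    have hall : ∀ i ∈ Finset.range m, ‖q (i + 1) - q i‖ = L / ↑m := by
      by_contra hne
      push_neg at hne
      obtain ⟨i, hi, hine⟩ := hne
      have hlt :=
        Finset.sum_lt_sum (f := fun i => ‖q (i + 1) - q i‖) (g := fun _ => L / ↑m)
          (fun j hj => hchord_le j (Finset.mem_range.mp hj))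
          ⟨i, hi, lt_of_le_of_ne (hchord_le i (Finset.mem_range.mp hi)) hine⟩
      rw [Finset.sum_const, Finset.card_range, nsmul_eq_mul] at hlt
      have hmul : (m:ℝ) * (L / ↑m) = L := by field_simp
      rw [hmul] at hlt
      have hlt' : polyLength q m < L := hlt
      rw [← hsum] at hlt'
      exact lt_irrefl L hlt'
    intro k l hk1 hkm hl1 hlm
    obtain ⟨k', rfl⟩ : ∃ k', k = k' + 1 := ⟨k - 1, by omega⟩
    obtain ⟨l', rfl⟩ : ∃ l', l = l' + 1 := ⟨l - 1, by omega⟩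
    simp only [Nat.add_sub_cancel]
    rw [hall k' (Finset.mem_range.mpr (by omega)), hall l' (Finset.mem_range.mpr (by omega))]
  · intro heq
    have hall : ∀ i ∈ Finset.range m, ‖q (i + 1) - q i‖ = L / ↑m := by
      intro i hi
      rw [Finset.mem_range] at hi
      have h := heq (i + 1) (k0 + 1) (by omega) (by omega) (by omega) (by omega)
      simp only [Nat.add_sub_cancel] at h
      rw [h]
      exact hchord0
    show L = polyLength q m
    rw [polyLength, Finset.sum_congr rfl hall, Finset.sum_const, Finset.card_range,
      nsmul_eq_mul]
    field_simp
end
end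

section
/- Let C be a polygonal curve with vertices p_0, …, p_m and L(C) > 0. Then there exists k ∈ {0, …, m−1} such that two consecutive vertices of the arclength respacing lie on the same segment of C and hence ‖f(p_{k+1}) − f(p_k)‖ = L(C)/m. -/
open Finset Filter

noncomputable section

/-! The arclengths `d k = polyLength p k` and the grid `k * L / m` both run from `0` to `L`, so a
discrete intermediate value argument gives `k < m` with `d k ≤ k * L / m` and
`(k + 1) * L / m ≤ d (k + 1)`. Both respaced vertices `q k`, `q (k + 1)` then lie on the segment
from `p k` to `p (k + 1)`, along which `P` moves at unit speed, so they are `L / m` apart. -/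

lemma polyLength_succ_sub {dim : ℕ} (p : ℕ → EuclideanSpace ℝ (Fin dim)) (k : ℕ) :
    polyLength p (k + 1) - polyLength p k = dist (p k) (p (k + 1)) := by
  rw [polyLength, polyLength, Finset.sum_range_succ, add_sub_cancel_left, dist_comm,
    dist_eq_norm]

lemma exists_lt_le_and_succ_le {α : Type*} [LinearOrder α] {f g : ℕ → α} {n : ℕ} (hn : 1 ≤ n)
    (h₀ : f 0 ≤ g 0) (hn' : g n ≤ f n) : ∃ k < n, f k ≤ g k ∧ g (k + 1) ≤ f (k + 1) := by
  induction n, hn using Nat.le_induction with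
  | base => exact ⟨0, Nat.one_pos, h₀, hn'⟩
  | succ n hn ih =>
    rcases le_or_gt (g n) (f n) with hgf | hfg
    · obtain ⟨k, hk, hfk, hgk⟩ := ih hgf
      exact ⟨k, by omega, hfk, hgk⟩
    · exact ⟨n, n.lt_succ_self, hfg.le, hn'⟩

lemma sub_div_sub_mem_Icc {a b s : ℝ} (hab : a < b) (hs : s ∈ Set.Icc a b) :
    (s - a) / (b - a) ∈ Set.Icc (0 : ℝ) 1 :=
  ⟨div_nonneg (by linarith [hs.1]) (by linarith),
    (div_le_one (by linarith)).2 (by linarith [hs.2])⟩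

lemma IsArcParam.apply_eq_lineMap {dim m k : ℕ} {p : ℕ → EuclideanSpace ℝ (Fin dim)}
    {P : ℝ → EuclideanSpace ℝ (Fin dim)} (hP : IsArcParam p m P) (hk : k < m)
    (hd : polyLength p k < polyLength p (k + 1)) {s : ℝ}
    (hs : s ∈ Set.Icc (polyLength p k) (polyLength p (k + 1))) :
    P s = AffineMap.lineMap (p k) (p (k + 1))
      ((s - polyLength p k) / (polyLength p (k + 1) - polyLength p k)) := by
  set t := (s - polyLength p k) / (polyLength p (k + 1) - polyLength p k)
  obtain ⟨ht₀, ht₁⟩ := sub_div_sub_mem_Icc hd hs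
  have hst : (1 - t) * polyLength p k + t * polyLength p (k + 1) = s := by
    simp only [t]
    field_simp [sub_ne_zero.2 hd.ne']
    ring
  have := hP (k + 1) (by omega) hk t ht₀ ht₁
  rwa [Nat.add_sub_cancel, hst, ← AffineMap.lineMap_apply_module] at this

/-- Some two consecutive vertices of the arclength respacing lie on the same
segment of `C`, hence are at distance exactly `L(C)/m`. -/
theorem stmt6 {dim m : ℕ} (hm : 1 ≤ m) (p : ℕ → EuclideanSpace ℝ (Fin dim))
    (hL : 0 < polyLength p m)
    (P : ℝ → EuclideanSpace ℝ (Fin dim)) (hP : IsArcParam p m P)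
    (q : ℕ → EuclideanSpace ℝ (Fin dim))
    (hq : ∀ k ≤ m, q k = P ((k : ℝ) * polyLength p m / m)) :
    ∃ k < m, ∃ j : ℕ, 1 ≤ j ∧ j ≤ m ∧
      q k ∈ segment ℝ (p (j - 1)) (p j) ∧
      q (k + 1) ∈ segment ℝ (p (j - 1)) (p j) ∧
      ‖q (k + 1) - q k‖ = polyLength p m / m := by
  set d := polyLength p
  set x : ℕ → ℝ := fun k => k * d m / m
  have hm₀ : (m : ℝ) ≠ 0 := by positivity
  obtain ⟨k, hk, hdk, hdk₁⟩ := exists_lt_le_and_succ_le (f := d) (g := x) hm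
    (by simp [d, x, polyLength]) (by simp [x, hm₀])
  have hx : x (k + 1) - x k = d m / m := by simp only [x]; push_cast; ring
  have hstep : 0 < d m / m := by positivity
  have hd : d k < d (k + 1) := by linarith
  have hq' : ∀ i ≤ m, x i ∈ Set.Icc (d k) (d (k + 1)) →
      q i = AffineMap.lineMap (p k) (p (k + 1)) ((x i - d k) / (d (k + 1) - d k)) ∧
        (x i - d k) / (d (k + 1) - d k) ∈ Set.Icc (0 : ℝ) 1 := fun i hi hxi =>
    ⟨(hq i hi).trans (hP.apply_eq_lineMap hk hd hxi), sub_div_sub_mem_Icc hd hxi⟩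
  obtain ⟨hqk, htk⟩ := hq' k hk.le ⟨hdk, by linarith⟩
  obtain ⟨hqk₁, htk₁⟩ := hq' (k + 1) hk ⟨by linarith, hdk₁⟩
  refine ⟨k, hk, k + 1, by omega, hk, ?_, ?_, ?_⟩
  · rw [Nat.add_sub_cancel, hqk]; exact lineMap_mem_segment ℝ _ _ htk
  · rw [Nat.add_sub_cancel, hqk₁]; exact lineMap_mem_segment ℝ _ _ htk₁
  · rw [← dist_eq_norm, hqk₁, hqk, dist_lineMap_lineMap, ← polyLength_succ_sub, Real.dist_eq,
      div_sub_div_same, sub_sub_sub_cancel_right, hx, abs_of_pos (by positivity),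
      div_mul_cancel₀ _ (sub_ne_zero.2 hd.ne')]
end
end

section
/- Let C be a polygonal curve in ℝ^d with three vertices p_0, p_1, p_2 such that p_2 lies on the line segment from p_0 to p_1, with d := ‖p_2 − p_0‖ > 0, and suppose L(C) = n·d for some positive integer n. Then the n-th iterated arclength respacing f^n(C) is equilateral, while f^j(C) is not equilateral for any 0 ≤ j < n. -/
/-!
All three vertices stay on the line `o + s • v` with `o = p 0`, `v = p 2 - p 0`; the endpoints
stay at `s = 0` and `s = 1` and the middle vertex sits at some `s = r ≥ 1`. Such a curve has
length `(2r - 1)‖v‖`, so its midpoint in arclength lies on the first edge at `s = r - 1/2`: each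
respacing moves the middle vertex back by `1/2`. The hypothesis `L(C) = n‖v‖` gives
`r = (n + 1)/2` initially, and the curve is equilateral exactly when `r = 1/2`.
-/

open Finset Filter

noncomputable section

variable {dim : ℕ}

lemma norm_add_smul_sub_add_smul {E : Type*} [NormedAddCommGroup E] [NormedSpace ℝ E]
    (o v : E) (s u : ℝ) : ‖(o + s • v) - (o + u • v)‖ = |s - u| * ‖v‖ := by
  rw [show (o + s • v) - (o + u • v) = (s - u) • v by module, norm_smul, Real.norm_eq_abs]

lemma polyLength_two (q : ℕ → EuclideanSpace ℝ (Fin dim)) :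
    polyLength q 2 = ‖q 1 - q 0‖ + ‖q 2 - q 1‖ := by
  simp [polyLength, Finset.sum_range_succ]

lemma isEquilateral_two_iff (q : ℕ → EuclideanSpace ℝ (Fin dim)) :
    IsEquilateral q 2 ↔ ‖q 1 - q 0‖ = ‖q 2 - q 1‖ := by
  refine ⟨fun h => h 1 2 le_rfl one_le_two one_le_two le_rfl, fun h k l hk1 hk2 hl1 hl2 => ?_⟩
  interval_cases k <;> interval_cases l <;> simp [h]

lemma IsArcParam.apply_zero {p : ℕ → EuclideanSpace ℝ (Fin dim)} {m : ℕ}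
    {P : ℝ → EuclideanSpace ℝ (Fin dim)} (hP : IsArcParam p m P) (hm : 1 ≤ m) : P 0 = p 0 := by
  simpa [polyLength] using hP 1 le_rfl hm 0 le_rfl zero_le_one

lemma IsArcParam.apply_polyLength {p : ℕ → EuclideanSpace ℝ (Fin dim)} {m : ℕ}
    {P : ℝ → EuclideanSpace ℝ (Fin dim)} (hP : IsArcParam p m P) (hm : 1 ≤ m) :
    P (polyLength p m) = p m := by
  simpa [Nat.sub_add_cancel hm] using hP m hm le_rfl 1 zero_le_one le_rfl

def IsFoldedPath (q : ℕ → EuclideanSpace ℝ (Fin dim)) (o v : EuclideanSpace ℝ (Fin dim))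
    (r : ℝ) : Prop :=
  q 0 = o ∧ q 1 = o + r • v ∧ q 2 = o + v

namespace IsFoldedPath

variable {q : ℕ → EuclideanSpace ℝ (Fin dim)} {o v : EuclideanSpace ℝ (Fin dim)} {r : ℝ}

lemma norm_sub_zero_one (h : IsFoldedPath q o v r) : ‖q 1 - q 0‖ = |r| * ‖v‖ := by
  obtain ⟨h0, h1, -⟩ := h
  simpa [h0, h1] using norm_add_smul_sub_add_smul o v r 0

lemma norm_sub_one_two (h : IsFoldedPath q o v r) : ‖q 2 - q 1‖ = |1 - r| * ‖v‖ := by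
  obtain ⟨-, h1, h2⟩ := h
  simpa [h1, h2] using norm_add_smul_sub_add_smul o v 1 r

lemma polyLength_eq (h : IsFoldedPath q o v r) (hr : 1 ≤ r) :
    polyLength q 2 = (2 * r - 1) * ‖v‖ := by
  rw [polyLength_two, h.norm_sub_zero_one, h.norm_sub_one_two, abs_of_nonneg (by linarith),
    abs_of_nonpos (by linarith)]
  ring

lemma isEquilateral_iff (h : IsFoldedPath q o v r) (hv : 0 < ‖v‖) :
    IsEquilateral q 2 ↔ r = 1 / 2 := by
  rw [isEquilateral_two_iff, h.norm_sub_zero_one, h.norm_sub_one_two,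
    mul_left_inj' hv.ne', abs_eq_abs]
  constructor
  · rintro (h | h) <;> linarith
  · intro h; left; linarith

/-- Arclength `L/2 = (r - 1/2)‖v‖` is reached on the first edge, at interpolation parameter
`t = (2r - 1)/(2r)`. -/
lemma arcParam_half_polyLength (h : IsFoldedPath q o v r) (hr : 1 ≤ r)
    {P : ℝ → EuclideanSpace ℝ (Fin dim)} (hP : IsArcParam q 2 P) :
    P (polyLength q 2 / 2) = o + (r - 1 / 2) • v := by
  have hr0 : 0 < r := by linarith
  set t := (2 * r - 1) / (2 * r)
  have ht0 : 0 ≤ t := div_nonneg (by linarith) (by linarith)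
  have ht1 : t ≤ 1 := (div_le_one (by linarith)).2 (by linarith)
  have e := hP 1 le_rfl one_le_two t ht0 ht1
  have hlen1 : polyLength q 1 = r * ‖v‖ := by
    simp [polyLength, h.norm_sub_zero_one, abs_of_pos hr0]
  have harg : (1 - t) * polyLength q (1 - 1) + t * polyLength q 1 = polyLength q 2 / 2 := by
    rw [h.polyLength_eq hr, hlen1]
    simp only [Nat.sub_self, polyLength, Finset.range_zero, Finset.sum_empty, t]
    field_simp
    ring
  have htr : t * r = r - 1 / 2 := by simp only [t]; field_simp
  obtain ⟨h0, h1, -⟩ := h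
  rw [harg, Nat.sub_self, h0, h1] at e
  rw [e, ← htr]
  module

lemma respaces (h : IsFoldedPath q o v r) (hr : 1 ≤ r) (hv : 0 < ‖v‖)
    {q' : ℕ → EuclideanSpace ℝ (Fin dim)} (hR : Respaces 2 q q') :
    IsFoldedPath q' o v (r - 1 / 2) := by
  have hL : 0 < polyLength q 2 := by
    rw [h.polyLength_eq hr]; exact mul_pos (by linarith) hv
  rcases hR with ⟨hL0, -⟩ | ⟨-, P, hP, hq'⟩
  · exact absurd hL0 hL.ne'
  refine ⟨?_, ?_, ?_⟩
  · rw [hq' 0 (by norm_num), Nat.cast_zero, zero_mul, zero_div, hP.apply_zero one_le_two, h.1]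
  · rw [hq' 1 (by norm_num), Nat.cast_one, one_mul, Nat.cast_ofNat,
      h.arcParam_half_polyLength hr hP]
  · rw [hq' 2 le_rfl, Nat.cast_ofNat, mul_div_cancel_left₀ _ two_ne_zero,
      hP.apply_polyLength one_le_two, h.2.2]

end IsFoldedPath

lemma exists_isFoldedPath_of_mem_segment {p : ℕ → EuclideanSpace ℝ (Fin dim)}
    (hseg : p 2 ∈ segment ℝ (p 0) (p 1)) (hne : p 2 ≠ p 0) :
    ∃ r, 1 ≤ r ∧ IsFoldedPath p (p 0) (p 2 - p 0) r := by
  rw [segment_eq_image'] at hseg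
  obtain ⟨θ, ⟨hθ0, hθ1⟩, hθ⟩ := hseg
  have hθpos : 0 < θ := hθ0.lt_of_ne' (by rintro rfl; simp at hθ; exact hne hθ.symm)
  refine ⟨θ⁻¹, one_le_inv₀ hθpos |>.2 hθ1, rfl, ?_, by abel⟩
  rw [← hθ, add_sub_cancel_left, smul_smul, inv_mul_cancel₀ hθpos.ne', one_smul, add_sub_cancel]

theorem stmt16_general {dim : ℕ} (p : ℕ → EuclideanSpace ℝ (Fin dim))
    (hseg : p 2 ∈ segment ℝ (p 0) (p 1))
    (hd : 0 < ‖p 2 - p 0‖)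
    (n : ℕ)
    (hLn : polyLength p 2 = (n : ℝ) * ‖p 2 - p 0‖)
    (c : ℕ → ℕ → EuclideanSpace ℝ (Fin dim))
    (hc0 : ∀ k ≤ 2, c 0 k = p k)
    (hstep : ∀ j, Respaces 2 (c j) (c (j + 1))) :
    IsEquilateral (c n) 2 ∧ ∀ j < n, ¬ IsEquilateral (c j) 2 := by
  obtain ⟨r, hr1, hp⟩ := exists_isFoldedPath_of_mem_segment hseg (sub_ne_zero.1 (norm_pos_iff.1 hd))
  have hr : r = (n + 1) / 2 := by
    rw [hp.polyLength_eq hr1] at hLn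
    linarith [mul_right_cancel₀ hd.ne' hLn]
  have hc : ∀ j ≤ n, IsFoldedPath (c j) (p 0) (p 2 - p 0) ((n - j + 1) / 2) := by
    intro j
    induction j with
    | zero => intro _; simpa [IsFoldedPath, hc0, ← hr] using hp
    | succ j ih =>
      intro hj
      have hjn : (j : ℝ) + 1 ≤ n := by exact_mod_cast hj
      convert (ih (by omega)).respaces (by linarith) hd (hstep j) using 1
      push_cast
      ring
  refine ⟨(hc n le_rfl).isEquilateral_iff hd |>.2 (by ring), fun j hj => ?_⟩
  have hjn : (j : ℝ) + 1 ≤ n := by exact_mod_cast hj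
  rw [(hc j hj.le).isEquilateral_iff hd]
  intro h
  linarith

/-- A three-vertex polygonal curve with `p 2` on the segment from `p 0` to
`p 1`, `d = ‖p 2 - p 0‖ > 0` and `L(C) = n·d` becomes equilateral precisely at
iteration `n` of arclength respacing. -/
theorem stmt16 {dim : ℕ} (p : ℕ → EuclideanSpace ℝ (Fin dim))
    (hseg : p 2 ∈ segment ℝ (p 0) (p 1))
    (hd : 0 < ‖p 2 - p 0‖)
    (n : ℕ) (hn : 0 < n)
    (hLn : polyLength p 2 = (n : ℝ) * ‖p 2 - p 0‖)
    (c : ℕ → ℕ → EuclideanSpace ℝ (Fin dim))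
    (hc0 : ∀ k ≤ 2, c 0 k = p k)
    (hstep : ∀ j, Respaces 2 (c j) (c (j + 1))) :
    IsEquilateral (c n) 2 ∧ ∀ j < n, ¬ IsEquilateral (c j) 2 :=
  stmt16_general p hseg hd n hLn c hc0 hstep
end
end
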